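/- arXiv:2304.13452 — 3 statements merged into one kernel-verified Lean document; each statement's English description precedes it below -/
import Mathlib

section
/- Consider a commutative diagram of finitely generated ℤ_p-modules with exact rows 0 → A′ → A → A″ → 0 and 0 → B′ → B → B″ → 0, and vertical ℤ_p-linear maps f′ : A′ → B′, f : A → B, f″ : A″ → B″ making both squares commute. If any two of the maps f′, f, f″ have finite kernel and finite cokernel, then so does the third, and in that case (len(ker f) − len(coker f) + rank_{ℤ_p} B) = (len(ker f′) − len(coker f′) + rank_{ℤ_p} B′) + (len(ker f″) − len(coker f″) + rank_{ℤ_p} B″). In particular, the Kobayashi rank is additive in short exact sequences of inverse systems: ∇N_n = ∇N′_n + ∇N″_n. -/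
/-!
The snake lemma turns the diagram into an exact sequence
`0 → ker f' → ker f → ker f'' → coker f' → coker f → coker f'' → 0`.
In an exact sequence a term is finite as soon as its two neighbours are, which gives the
two-out-of-three statement, and lengths of the terms satisfy
`len V₀ + len V₂ + len V₄ = len V₁ + len V₃ + len V₅`, since each `len Vᵢ` splits as the sum of
the lengths of the images entering and leaving it. Together with additivity of `finrank` on
`0 → B' → B → B'' → 0` this is the identity between the indices.
-/

open LinearMap

/-- The length of a `ℤ_[p]`-module `M`, defined as the Krull dimension of its
lattice of submodules. -/
noncomputable def zpLen (p : ℕ) [Fact p.Prime] (M : Type*) [AddCommGroup M]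
    [Module ℤ_[p] M] : WithBot ℕ∞ :=
  Order.krullDim (Submodule ℤ_[p] M)

/-- A `ℤ_[p]`-linear map has finite kernel and finite cokernel. -/
def FinIdx {p : ℕ} [Fact p.Prime] {M N : Type*} [AddCommGroup M] [AddCommGroup N]
    [Module ℤ_[p] M] [Module ℤ_[p] N] (g : M →ₗ[ℤ_[p]] N) : Prop :=
  Finite (ker g) ∧ Finite (N ⧸ range g)

/-- The "Kobayashi index" `len (ker g) - len (coker g) + rank (codomain)` of a
`ℤ_[p]`-linear map `g : M → N` (meaningful when `ker g` and `coker g` are finite). -/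
noncomputable def kobIdx {p : ℕ} [Fact p.Prime] {M N : Type*} [AddCommGroup M]
    [AddCommGroup N] [Module ℤ_[p] M] [Module ℤ_[p] N] (g : M →ₗ[ℤ_[p]] N) : ℤ :=
  (((zpLen p (ker g)).unbotD 0).toNat : ℤ) - (((zpLen p (N ⧸ range g)).unbotD 0).toNat : ℤ)
    + (Module.finrank ℤ_[p] N : ℤ)

open Function

section ExactSequence

variable {R : Type*} [Ring R] {M N P : Type*} [AddCommGroup M] [AddCommGroup N] [AddCommGroup P]
  [Module R M] [Module R N] [Module R P] {f : M →ₗ[R] N} {g : N →ₗ[R] P}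

lemma Function.Exact.finite_of_finite (hfg : Exact f g) [Finite M] [Finite P] : Finite N := by
  have : Finite (ker g) := by
    rw [exact_iff.mp hfg]
    exact .of_surjective _ f.surjective_rangeRestrict
  have : Finite (N ⧸ (ker g).toAddSubgroup) := .of_equiv _ g.quotKerEquivRange.toEquiv.symm
  exact .of_equiv _
    (AddSubgroup.addGroupEquivQuotientProdAddSubgroup (s := (ker g).toAddSubgroup)).symm

namespace Module

lemma length_ne_top_of_finite [Finite M] : length R M ≠ ⊤ :=
  have := isArtinian_of_finite (R := R) (M := M)
  length_ne_top

lemma length_eq_length_range_add_length_range (hfg : Exact f g) :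
    length R N = length R (range f) + length R (range g) := by
  rw [length_eq_add_of_exact (ker g).subtype g.rangeRestrict (ker g).injective_subtype
    g.surjective_rangeRestrict (exact_iff.mpr (by simp)), exact_iff.mp hfg]

theorem length_add_length_add_length_eq_of_exact_six {V₀ V₁ V₂ V₃ V₄ V₅ : Type*}
    [AddCommGroup V₀] [AddCommGroup V₁] [AddCommGroup V₂] [AddCommGroup V₃] [AddCommGroup V₄]
    [AddCommGroup V₅] [Module R V₀] [Module R V₁] [Module R V₂] [Module R V₃] [Module R V₄]
    [Module R V₅] {φ₀ : V₀ →ₗ[R] V₁} {φ₁ : V₁ →ₗ[R] V₂} {φ₂ : V₂ →ₗ[R] V₃} {φ₃ : V₃ →ₗ[R] V₄}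
    {φ₄ : V₄ →ₗ[R] V₅} (h₀ : Function.Injective φ₀) (h₁ : Exact φ₀ φ₁) (h₂ : Exact φ₁ φ₂)
    (h₃ : Exact φ₂ φ₃) (h₄ : Exact φ₃ φ₄) (h₅ : Function.Surjective φ₄) :
    length R V₀ + length R V₂ + length R V₄ = length R V₁ + length R V₃ + length R V₅ := by
  have e₀ := (LinearEquiv.ofInjective φ₀ h₀).length_eq
  have e₅ : length R V₅ = length R (range φ₄) := by rw [range_eq_top.mpr h₅, length_top]
  rw [e₀, e₅, length_eq_length_range_add_length_range h₁,
    length_eq_length_range_add_length_range h₂, length_eq_length_range_add_length_range h₃,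
    length_eq_length_range_add_length_range h₄]
  ac_rfl

end Module

end ExactSequence

theorem Module.finrank_eq_finrank_add_finrank_of_exact {R : Type*} [CommRing R] [IsDomain R]
    {M N P : Type*} [AddCommGroup M] [AddCommGroup N] [AddCommGroup P] [Module R M] [Module R N]
    [Module R P] [Module.Finite R N] {f : M →ₗ[R] N} {g : N →ₗ[R] P} (hf : Function.Injective f)
    (hfg : Exact f g) (hg : Function.Surjective g) :
    finrank R N = finrank R M + finrank R P := by
  rw [← (range f).finrank_quotient_add_finrank, add_comm,
    (LinearEquiv.ofInjective f hf).finrank_eq.symm,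
    ((Submodule.quotEquivOfEq _ _ (exact_iff.mp hfg).symm).trans
      (g.quotKerEquivOfSurjective hg)).finrank_eq]

section Snake

variable {R : Type*} [CommRing R] {M₁ M₂ M₃ N₁ N₂ N₃ : Type*}
  [AddCommGroup M₁] [AddCommGroup M₂] [AddCommGroup M₃]
  [AddCommGroup N₁] [AddCommGroup N₂] [AddCommGroup N₃]
  [Module R M₁] [Module R M₂] [Module R M₃] [Module R N₁] [Module R N₂] [Module R N₃]
  {i₁ : M₁ →ₗ[R] N₁} {i₂ : M₂ →ₗ[R] N₂} {i₃ : M₃ →ₗ[R] N₃}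
  {f₁ : M₁ →ₗ[R] M₂} {f₂ : M₂ →ₗ[R] M₃} {g₁ : N₁ →ₗ[R] N₂} {g₂ : N₂ →ₗ[R] N₃}

lemma SnakeLemma.exact_restrict_ker (hf : Exact f₁ f₂) (hg₁ : Injective g₁)
    (h₁ : i₂ ∘ₗ f₁ = g₁ ∘ₗ i₁) (hker₁ : ∀ x ∈ ker i₁, f₁ x ∈ ker i₂)
    (hker₂ : ∀ x ∈ ker i₂, f₂ x ∈ ker i₃) :
    Exact (f₁.restrict hker₁) (f₂.restrict hker₂) := by
  rintro ⟨x, hx⟩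
  constructor
  · intro h0
    obtain ⟨y, rfl⟩ := (hf x).mp congr(($h0 : M₃))
    refine ⟨⟨y, hg₁ ?_⟩, rfl⟩
    simpa [mem_ker.mp hx] using congr($h₁ y).symm
  · rintro ⟨y, hy⟩
    obtain rfl : f₁ y = x := congr(($hy : M₂))
    exact Subtype.ext (hf.apply_apply_eq_zero (y : M₁))

lemma SnakeLemma.exact_mapQ_range (hf₂ : Surjective f₂) (hg : Exact g₁ g₂)
    (h₂ : i₃ ∘ₗ f₂ = g₂ ∘ₗ i₂) (hrange₁ : range i₁ ≤ (range i₂).comap g₁)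
    (hrange₂ : range i₂ ≤ (range i₃).comap g₂) :
    Exact ((range i₁).mapQ _ g₁ hrange₁) ((range i₂).mapQ _ g₂ hrange₂) := by
  refine (hg.exact_mapQ_iff hrange₁ hrange₂).mpr ?_
  rintro _ ⟨-, z, rfl⟩
  obtain ⟨x, rfl⟩ := hf₂ z
  exact ⟨i₂ x, mem_range_self i₂ x, congr($h₂ x).symm⟩

theorem SnakeLemma.exists_exact_ker_coker (hf₁ : Injective f₁) (hf : Exact f₁ f₂)
    (hf₂ : Surjective f₂) (hg₁ : Injective g₁) (hg : Exact g₁ g₂) (hg₂ : Surjective g₂)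
    (h₁ : i₂ ∘ₗ f₁ = g₁ ∘ₗ i₁) (h₂ : i₃ ∘ₗ f₂ = g₂ ∘ₗ i₂) :
    ∃ (φ₀ : ker i₁ →ₗ[R] ker i₂) (φ₁ : ker i₂ →ₗ[R] ker i₃) (φ₂ : ker i₃ →ₗ[R] N₁ ⧸ range i₁)
      (φ₃ : (N₁ ⧸ range i₁) →ₗ[R] N₂ ⧸ range i₂) (φ₄ : (N₂ ⧸ range i₂) →ₗ[R] N₃ ⧸ range i₃),
      Injective φ₀ ∧ Exact φ₀ φ₁ ∧ Exact φ₁ φ₂ ∧ Exact φ₂ φ₃ ∧ Exact φ₃ φ₄ ∧ Surjective φ₄ := by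
  have hker₁ : ∀ x ∈ ker i₁, f₁ x ∈ ker i₂ := fun x hx => by
    simpa [mem_ker.mp hx] using congr($h₁ x)
  have hker₂ : ∀ x ∈ ker i₂, f₂ x ∈ ker i₃ := fun x hx => by
    simpa [mem_ker.mp hx] using congr($h₂ x)
  have hrange₁ : range i₁ ≤ (range i₂).comap g₁ := by
    rintro _ ⟨x, rfl⟩
    exact ⟨f₁ x, congr($h₁ x)⟩
  have hrange₂ : range i₂ ≤ (range i₃).comap g₂ := by
    rintro _ ⟨x, rfl⟩
    exact ⟨f₂ x, congr($h₂ x)⟩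
  refine ⟨f₁.restrict hker₁, f₂.restrict hker₂,
    SnakeLemma.δ' i₁ i₂ i₃ f₁ f₂ hf g₁ g₂ hg h₁.symm h₂.symm _ (exact_subtype_ker_map i₃)
      _ (exact_map_mkQ_range i₁) hf₂ hg₁,
    (range i₁).mapQ _ g₁ hrange₁, (range i₂).mapQ _ g₂ hrange₂,
    fun x y hxy => Subtype.ext (hf₁ congr(($hxy : M₂))),
    SnakeLemma.exact_restrict_ker hf hg₁ h₁ hker₁ hker₂, ?_, ?_,
    SnakeLemma.exact_mapQ_range hf₂ hg h₂ hrange₁ hrange₂, ?_⟩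
  · exact SnakeLemma.exact_δ'_right _ _ _ _ _ _ _ _ _ _ _ _ (exact_subtype_ker_map i₂) _ _ _ _ _ _ _
      rfl (ker i₃).injective_subtype
  · exact SnakeLemma.exact_δ'_left _ _ _ _ _ _ _ _ _ _ _ _ _ _ _ _ (exact_map_mkQ_range i₂) _ _ _
      rfl (range i₁).mkQ_surjective
  · intro z
    obtain ⟨y, rfl⟩ := (range i₃).mkQ_surjective z
    obtain ⟨x, rfl⟩ := hg₂ y
    exact ⟨(range i₂).mkQ x, rfl⟩

end Snake

lemma zpLen_unbotD_eq_length (p : ℕ) [Fact p.Prime] (M : Type*) [AddCommGroup M]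
    [Module ℤ_[p] M] : (zpLen p M).unbotD 0 = Module.length ℤ_[p] M := by
  rw [zpLen, ← Module.coe_length, WithBot.unbotD_coe]

theorem stmt1_general (p : ℕ) [Fact p.Prime]
    (A' A A'' B' B B'' : Type*)
    [AddCommGroup A'] [AddCommGroup A] [AddCommGroup A'']
    [AddCommGroup B'] [AddCommGroup B] [AddCommGroup B'']
    [Module ℤ_[p] A'] [Module ℤ_[p] A] [Module ℤ_[p] A'']
    [Module ℤ_[p] B'] [Module ℤ_[p] B] [Module ℤ_[p] B'']
    [Module.Finite ℤ_[p] B]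
    (ιA : A' →ₗ[ℤ_[p]] A) (prA : A →ₗ[ℤ_[p]] A'')
    (ιB : B' →ₗ[ℤ_[p]] B) (prB : B →ₗ[ℤ_[p]] B'')
    (hιA : Function.Injective ιA) (hexA : Function.Exact ιA prA)
    (hprA : Function.Surjective prA)
    (hιB : Function.Injective ιB) (hexB : Function.Exact ιB prB)
    (hprB : Function.Surjective prB)
    (f' : A' →ₗ[ℤ_[p]] B') (f : A →ₗ[ℤ_[p]] B) (f'' : A'' →ₗ[ℤ_[p]] B'')
    (hcomm₁ : f ∘ₗ ιA = ιB ∘ₗ f') (hcomm₂ : f'' ∘ₗ prA = prB ∘ₗ f) :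
    ((FinIdx f' ∧ FinIdx f → FinIdx f'') ∧
     (FinIdx f' ∧ FinIdx f'' → FinIdx f) ∧
     (FinIdx f ∧ FinIdx f'' → FinIdx f')) ∧
    (FinIdx f' → FinIdx f → FinIdx f'' → kobIdx f = kobIdx f' + kobIdx f'') := by
  obtain ⟨φ₀, φ₁, φ₂, φ₃, φ₄, h₀, h₁, h₂, h₃, h₄, h₅⟩ :=
    SnakeLemma.exists_exact_ker_coker hιA hexA hprA hιB hexB hprB hcomm₁ hcomm₂
  refine ⟨⟨?_, ?_, ?_⟩, fun ⟨_, _⟩ ⟨_, _⟩ ⟨_, _⟩ => ?_⟩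
  · rintro ⟨⟨_, _⟩, _, _⟩
    exact ⟨h₂.finite_of_finite, .of_surjective φ₄ h₅⟩
  · rintro ⟨⟨_, _⟩, _, _⟩
    exact ⟨h₁.finite_of_finite, h₄.finite_of_finite⟩
  · rintro ⟨⟨_, _⟩, _, _⟩
    exact ⟨.of_injective φ₀ h₀, h₃.finite_of_finite⟩
  have hlen := congrArg ENat.toNat
    (Module.length_add_length_add_length_eq_of_exact_six h₀ h₁ h₂ h₃ h₄ h₅)
  simp only [ne_eq, ENat.add_eq_top, Module.length_ne_top_of_finite, or_self, not_false_eq_true,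
    ENat.toNat_add] at hlen
  have hrank := Module.finrank_eq_finrank_add_finrank_of_exact hιB hexB hprB
  simp only [kobIdx, zpLen_unbotD_eq_length]
  omega

/-- Given a commutative diagram of finitely generated `ℤ_[p]`-modules with exact rows
`0 → A' → A → A'' → 0` and `0 → B' → B → B'' → 0` and vertical maps `f', f, f''`:
if any two of `f', f, f''` have finite kernel and cokernel then so does the third,
and in that case the index `len ker - len coker + rank` of `f` is the sum of those of
`f'` and `f''`.  This is the additivity of the Kobayashi rank in short exact
sequences of inverse systems. -/
theorem stmt1 (p : ℕ) [Fact p.Prime]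
    (A' A A'' B' B B'' : Type*)
    [AddCommGroup A'] [AddCommGroup A] [AddCommGroup A'']
    [AddCommGroup B'] [AddCommGroup B] [AddCommGroup B'']
    [Module ℤ_[p] A'] [Module ℤ_[p] A] [Module ℤ_[p] A'']
    [Module ℤ_[p] B'] [Module ℤ_[p] B] [Module ℤ_[p] B'']
    [Module.Finite ℤ_[p] A'] [Module.Finite ℤ_[p] A] [Module.Finite ℤ_[p] A'']
    [Module.Finite ℤ_[p] B'] [Module.Finite ℤ_[p] B] [Module.Finite ℤ_[p] B'']
    (ιA : A' →ₗ[ℤ_[p]] A) (prA : A →ₗ[ℤ_[p]] A'')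
    (ιB : B' →ₗ[ℤ_[p]] B) (prB : B →ₗ[ℤ_[p]] B'')
    (hιA : Function.Injective ιA) (hexA : Function.Exact ιA prA)
    (hprA : Function.Surjective prA)
    (hιB : Function.Injective ιB) (hexB : Function.Exact ιB prB)
    (hprB : Function.Surjective prB)
    (f' : A' →ₗ[ℤ_[p]] B') (f : A →ₗ[ℤ_[p]] B) (f'' : A'' →ₗ[ℤ_[p]] B'')
    (hcomm₁ : f ∘ₗ ιA = ιB ∘ₗ f') (hcomm₂ : f'' ∘ₗ prA = prB ∘ₗ f) :
    ((FinIdx f' ∧ FinIdx f → FinIdx f'') ∧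
     (FinIdx f' ∧ FinIdx f'' → FinIdx f) ∧
     (FinIdx f ∧ FinIdx f'' → FinIdx f')) ∧
    (FinIdx f' → FinIdx f → FinIdx f'' → kobIdx f = kobIdx f' + kobIdx f'') :=
  stmt1_general p A' A A'' B' B B'' ιA prA ιB prB hιA hexA hprA hιB hexB hprB f' f f'' hcomm₁ hcomm₂
end

section
/- Let f, h ∈ Λ be nonzero elements with no common irreducible factor (i.e., f and h are coprime in the unique factorization domain Λ). Then the quotient Λ/(f, h) is finite. -/
/-!
Not both of `f`, `h` are divisible by `p`; say `f` is not. A nonzero prime `P` of `ℤ_p⟦X⟧` with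
`p ∉ P` is principal: by Weierstrass division, an element of `P` whose reduction mod `p` has
minimal order divides every element of `P`. So no such prime contains the coprime pair `f, h`,
i.e. `p ∈ √(f, h)`. By Weierstrass preparation `f = D u` with `u` a unit and
`D = X ^ n + (multiples of p)`, hence also `X ∈ √(f, h)`. Thus `(f, h)` contains a power of
the finitely generated ideal `(p, X)`, whose quotient is the finite residue field.
-/

/-- The Iwasawa algebra `Λ = ℤ_p[[X]]`. -/
noncomputable abbrev Lam (p : ℕ) [Fact p.Prime] : Type := PowerSeries ℤ_[p]

open IsLocalRing
open scoped Polynomial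

theorem Ideal.finite_quotient_of_le_radical {R : Type*} [CommRing R] [IsNoetherianRing R]
    {I J : Ideal R} [Finite (R ⧸ J)] (hJ : J ≤ I.radical) : Finite (R ⧸ I) := by
  obtain ⟨n, hn⟩ := Ideal.exists_pow_le_of_le_radical_of_fg hJ (IsNoetherian.noetherian J)
  have := Ideal.finite_quotient_pow (IsNoetherian.noetherian J) n
  exact Finite.of_surjective _ (Ideal.Quotient.factor_surjective hn)

namespace PowerSeries

variable {A : Type*}

theorem C_dvd_iff [CommSemiring A] {a : A} {φ : A⟦X⟧} : C a ∣ φ ↔ ∀ n, a ∣ coeff n φ := by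
  constructor
  · rintro ⟨ψ, rfl⟩ n
    rw [coeff_C_mul]
    exact dvd_mul_right _ _
  · intro h
    choose c hc using h
    exact ⟨mk c, ext fun n => by rw [coeff_C_mul, coeff_mk, ← hc]⟩

theorem isUnit_C_iff [CommSemiring A] {a : A} : IsUnit (C a : A⟦X⟧) ↔ IsUnit a :=
  ⟨fun h => by simpa using h.map constantCoeff, fun h => h.map C⟩

theorem order_toNat_lt_of_coeff_eq_zero [Semiring A] {φ : A⟦X⟧} (hφ : φ ≠ 0) {n : ℕ}
    (h : ∀ i, n ≤ i → coeff i φ = 0) : φ.order.toNat < n :=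
  lt_of_not_ge fun hn => coeff_order hφ (h _ hn)

theorem finite_quotient_map_C_sup_span_X [CommRing A] [IsLocalRing A] [Finite (ResidueField A)] :
    Finite (A⟦X⟧ ⧸ ((maximalIdeal A).map C ⊔ Ideal.span {X})) := by
  set J := (maximalIdeal A).map C ⊔ Ideal.span {(X : A⟦X⟧)}
  let φ : A →+* A⟦X⟧ ⧸ J := (Ideal.Quotient.mk J).comp C
  have hφ : ∀ a ∈ maximalIdeal A, φ a = 0 := fun a ha =>
    Ideal.Quotient.eq_zero_iff_mem.mpr (Ideal.mem_sup_left (Ideal.mem_map_of_mem C ha))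
  have hsurj : Function.Surjective φ := by
    intro y
    obtain ⟨g, rfl⟩ := Ideal.Quotient.mk_surjective y
    refine ⟨constantCoeff g, Ideal.Quotient.eq.mpr (Ideal.mem_sup_right ?_)⟩
    rw [Ideal.mem_span_singleton, X_dvd_iff]
    simp
  have : Finite (A ⧸ maximalIdeal A) := inferInstanceAs (Finite (ResidueField A))
  exact Finite.of_surjective _ (Ideal.Quotient.lift_surjective_of_surjective _ hφ hsurj)

section IsAdicComplete

variable [CommRing A] [IsLocalRing A] [IsAdicComplete (maximalIdeal A) A]

theorem X_mem_radical_of_map_C_le {I : Ideal A⟦X⟧} (hI : (maximalIdeal A).map C ≤ I.radical)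
    {f : A⟦X⟧} (hfI : f ∈ I) (hf : f.map (residue A) ≠ 0) : X ∈ I.radical := by
  obtain ⟨D, u, hD, hu, rfl⟩ := exists_isWeierstrassFactorization hf
  have hDI : (D : A⟦X⟧) ∈ I := by
    simpa [mul_assoc] using I.mul_mem_right (↑hu.unit⁻¹ : A⟦X⟧) hfI
  have hker : Polynomial.X ^ D.natDegree - D ∈ (maximalIdeal A).map Polynomial.C := by
    rw [← Ideal.mk_ker (I := maximalIdeal A), ← Polynomial.ker_mapRingHom, RingHom.mem_ker,
      Polynomial.coe_mapRingHom, Polynomial.map_sub, Polynomial.map_pow, Polynomial.map_X,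
      hD.map_eq_X_pow, sub_self]
  have hsub : ((Polynomial.X ^ D.natDegree - D : A[X]) : A⟦X⟧) ∈ (maximalIdeal A).map C := by
    have := Ideal.mem_map_of_mem Polynomial.coeToPowerSeries.ringHom hker
    rwa [Ideal.map_map, show Polynomial.coeToPowerSeries.ringHom.comp Polynomial.C = C from
      RingHom.ext Polynomial.coe_C] at this
  refine Ideal.mem_radical_of_pow_mem (m := D.natDegree) ?_
  simpa using I.radical.add_mem (I.le_radical hDI) (hI hsub)

end IsAdicComplete

section IsDiscreteValuationRing

variable [CommRing A] [IsDomain A] [IsDiscreteValuationRing A] {ϖ : A}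

theorem map_residue_eq_zero_iff (hϖ : Irreducible ϖ) {φ : A⟦X⟧} :
    φ.map (residue A) = 0 ↔ C ϖ ∣ φ := by
  simp [PowerSeries.ext_iff, C_dvd_iff, residue_eq_zero_iff, hϖ.maximalIdeal_eq,
    Ideal.mem_span_singleton]

theorem exists_eq_C_pow_mul (hϖ : Irreducible ϖ) {φ : A⟦X⟧} (hφ : φ ≠ 0) :
    ∃ n ψ, φ = C ϖ ^ n * ψ ∧ ψ.map (residue A) ≠ 0 := by
  obtain ⟨n, ψ, hψ, rfl⟩ := WfDvdMonoid.max_power_factor' hφ (isUnit_C_iff.not.mpr hϖ.not_isUnit)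
  exact ⟨n, ψ, rfl, (map_residue_eq_zero_iff hϖ).not.mpr hψ⟩

theorem exists_mem_map_residue_ne_zero (hϖ : Irreducible ϖ) {P : Ideal A⟦X⟧} [hP : P.IsPrime]
    (hϖP : C ϖ ∉ P) {φ : A⟦X⟧} (hφP : φ ∈ P) (hφ : φ ≠ 0) :
    ∃ ψ ∈ P, ψ.map (residue A) ≠ 0 ∧ ∀ i, coeff i φ = 0 → coeff i ψ = 0 := by
  obtain ⟨n, ψ, rfl, hψ⟩ := exists_eq_C_pow_mul hϖ hφ
  refine ⟨ψ, ?_, hψ, fun i hi => ?_⟩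
  · exact (hP.mem_or_mem hφP).resolve_left fun h => hϖP (hP.mem_of_pow_mem n h)
  · rw [← map_pow, coeff_C_mul] at hi
    exact (mul_eq_zero.mp hi).resolve_left (pow_ne_zero n hϖ.ne_zero)

variable [IsAdicComplete (maximalIdeal A) A]

theorem isPrincipal_of_isPrime_of_C_notMem (hϖ : Irreducible ϖ) {P : Ideal A⟦X⟧} [P.IsPrime]
    (hP : P ≠ ⊥) (hϖP : C ϖ ∉ P) : P.IsPrincipal := by
  classical
  have hex : ∃ n, ∃ g ∈ P, g.map (residue A) ≠ 0 ∧ (g.map (residue A)).order.toNat = n := by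
    obtain ⟨φ, hφP, hφ⟩ := Submodule.exists_mem_ne_zero_of_ne_bot hP
    obtain ⟨ψ, hψP, hψ, -⟩ := exists_mem_map_residue_ne_zero hϖ hϖP hφP hφ
    exact ⟨_, ψ, hψP, hψ, rfl⟩
  obtain ⟨g, hgP, hg, hgn⟩ := Nat.find_spec hex
  refine ⟨g, le_antisymm (fun t ht => ?_) ((Ideal.span_singleton_le_iff_mem _).mpr hgP)⟩
  obtain ⟨q, r, hr, htr⟩ := exists_isWeierstrassDivision t hg
  rw [Ideal.submodule_span_eq, Ideal.mem_span_singleton']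
  by_cases hr0 : (r : A⟦X⟧) = 0
  · exact ⟨q, by rw [htr, hr0, add_zero, mul_comm]⟩
  have hrP : (r : A⟦X⟧) ∈ P := by
    rw [eq_sub_of_add_eq' htr.symm]
    exact P.sub_mem ht (P.mul_mem_right q hgP)
  obtain ⟨ψ, hψP, hψ, hψr⟩ := exists_mem_map_residue_ne_zero hϖ hϖP hrP hr0
  have hψn : (ψ.map (residue A)).order.toNat < Nat.find hex := by
    refine order_toNat_lt_of_coeff_eq_zero hψ fun i hi => ?_
    have hri : coeff i (r : A⟦X⟧) = 0 := by
      rw [Polynomial.coeff_coe]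
      exact Polynomial.coeff_eq_zero_of_degree_lt (hr.trans_le (by exact_mod_cast hgn ▸ hi))
    rw [coeff_map, hψr i hri, map_zero]
  exact absurd (Nat.find_min' hex ⟨ψ, hψP, hψ, rfl⟩) hψn.not_ge

theorem C_mem_radical_span_pair (hϖ : Irreducible ϖ) {f h : A⟦X⟧} (hf : f ≠ 0)
    (hfh : IsRelPrime f h) : C ϖ ∈ (Ideal.span {f, h}).radical := by
  rw [Ideal.radical_eq_sInf, Ideal.mem_sInf]
  rintro P ⟨hle, hP⟩
  by_contra hϖP
  have hfP : f ∈ P := hle (Ideal.subset_span (by simp))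
  have hhP : h ∈ P := hle (Ideal.subset_span (by simp))
  have hP0 : P ≠ ⊥ := (Submodule.ne_bot_iff P).mpr ⟨f, hfP, hf⟩
  obtain ⟨g, rfl⟩ := (isPrincipal_of_isPrime_of_C_notMem hϖ hP0 hϖP).principal
  rw [Ideal.submodule_span_eq, Ideal.mem_span_singleton] at hfP hhP
  exact hP.ne_top (Ideal.span_singleton_eq_top.mpr (hfh hfP hhP))

variable [Finite (ResidueField A)]

theorem finite_quotient_span_pair_of_map_ne_zero {f h : A⟦X⟧} (hf : f.map (residue A) ≠ 0)
    (hfh : IsRelPrime f h) : Finite (A⟦X⟧ ⧸ Ideal.span {f, h}) := by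
  obtain ⟨ϖ, hϖ⟩ := IsDiscreteValuationRing.exists_irreducible A
  have hm : (maximalIdeal A).map C ≤ (Ideal.span {f, h}).radical := by
    rw [hϖ.maximalIdeal_eq, Ideal.map_span, Set.image_singleton, Ideal.span_le,
      Set.singleton_subset_iff]
    exact C_mem_radical_span_pair hϖ (fun h0 => hf (by simp [h0])) hfh
  have hX := X_mem_radical_of_map_C_le hm (Ideal.subset_span (by simp)) hf
  have := finite_quotient_map_C_sup_span_X (A := A)
  exact Ideal.finite_quotient_of_le_radical
    (sup_le hm ((Ideal.span_singleton_le_iff_mem _).mpr hX))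

theorem finite_quotient_span_pair {f h : A⟦X⟧} (hfh : IsRelPrime f h) :
    Finite (A⟦X⟧ ⧸ Ideal.span {f, h}) := by
  obtain ⟨ϖ, hϖ⟩ := IsDiscreteValuationRing.exists_irreducible A
  by_cases hf : f.map (residue A) = 0
  · have hh : h.map (residue A) ≠ 0 := fun hh => isUnit_C_iff.not.mpr hϖ.not_isUnit
      (hfh ((map_residue_eq_zero_iff hϖ).mp hf) ((map_residue_eq_zero_iff hϖ).mp hh))
    rw [Ideal.span_pair_comm]
    exact finite_quotient_span_pair_of_map_ne_zero hh hfh.symm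
  · exact finite_quotient_span_pair_of_map_ne_zero hf hfh

end IsDiscreteValuationRing

end PowerSeries

theorem stmt7_general (p : ℕ) [Fact p.Prime] (f h : Lam p)
    (hcop : IsRelPrime f h) :
    Finite ((Lam p) ⧸ Ideal.span {f, h}) :=
  PowerSeries.finite_quotient_span_pair hcop

/-- Let `f, h ∈ Λ = ℤ_p[[X]]` be nonzero elements with no common irreducible factor,
i.e. coprime in the UFD `Λ` (every common divisor is a unit).  Then `Λ/(f, h)` is
finite. -/
theorem stmt7 (p : ℕ) [Fact p.Prime] (f h : Lam p) (hf : f ≠ 0) (hh : h ≠ 0)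
    (hcop : IsRelPrime f h) :
    Finite ((Lam p) ⧸ Ideal.span {f, h}) :=
  stmt7_general p f h hcop
end

section
/- If g ∈ ℤ_p[X] is a distinguished polynomial of degree d, then the quotient Λ/(g) is a free ℤ_p-module of rank d, with basis the images of 1, X, …, X^{d−1}. -/
open Polynomial
open scoped PowerSeries

/-- A distinguished polynomial: monic, with all non-leading coefficients divisible by `p`. -/
def IsDistinguished (p : ℕ) [Fact p.Prime] (g : Polynomial ℤ_[p]) : Prop :=
  g.Monic ∧ ∀ i < g.natDegree, (p : ℤ_[p]) ∣ g.coeff i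

/-!
Weierstrass division by a distinguished polynomial `g` over a complete ring identifies
`A⟦X⟧ ⧸ (g)` with `A[X] ⧸ (g)` (Mathlib's `IsDistinguishedAt.algEquivQuotient`), and since `g`
is monic the latter is free with basis `1, X, …, X ^ (deg g - 1)`. Over `ℤ_[p]`, being
distinguished in the sense above is being distinguished at the maximal ideal `(p)`.
-/

namespace Polynomial.IsDistinguishedAt

variable {A : Type*} [CommRing A] {g : A[X]} {I : Ideal A}

noncomputable def basisQuotientPowerSeries (H : g.IsDistinguishedAt I) [IsAdicComplete I A] :
    Module.Basis (Fin g.natDegree) A (A⟦X⟧ ⧸ Ideal.span {(g : A⟦X⟧)}) :=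
  (AdjoinRoot.powerBasis' H.monic).basis.map H.algEquivQuotient.toLinearEquiv

theorem basisQuotientPowerSeries_apply (H : g.IsDistinguishedAt I) [IsAdicComplete I A]
    (i : Fin g.natDegree) :
    H.basisQuotientPowerSeries i = Ideal.Quotient.mk _ (PowerSeries.X ^ (i : ℕ)) := by
  have h : ((AdjoinRoot.powerBasis' H.monic).basis i : A[X] ⧸ Ideal.span {g}) =
      Ideal.Quotient.mk _ (X ^ (i : ℕ)) := by
    simp
    rfl -- `AdjoinRoot g` is `A[X] ⧸ (g)` with its own (defeq) ring instance
  exact (congrArg H.algEquivQuotient h).trans (by rw [H.algEquivQuotient_apply]; simp)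

end Polynomial.IsDistinguishedAt

theorem IsDistinguished.isDistinguishedAt {p : ℕ} [Fact p.Prime] {g : ℤ_[p][X]}
    (h : IsDistinguished p g) : g.IsDistinguishedAt (IsLocalRing.maximalIdeal ℤ_[p]) where
  monic := h.1
  mem hi := by
    rw [PadicInt.maximalIdeal_eq_span_p, Ideal.mem_span_singleton]
    exact h.2 _ hi

/-- If `g ∈ ℤ_p[X]` is a distinguished polynomial of degree `d`, then `Λ/(g)` is a
free `ℤ_[p]`-module of rank `d`, with basis the images of `1, X, …, X^(d-1)`. -/
theorem stmt8 (p : ℕ) [Fact p.Prime] (g : Polynomial ℤ_[p]) (d : ℕ)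
    (hdist : IsDistinguished p g) (hdeg : g.natDegree = d) :
    Module.Free ℤ_[p] ((Lam p) ⧸ Ideal.span {(g : PowerSeries ℤ_[p])}) ∧
    Module.finrank ℤ_[p] ((Lam p) ⧸ Ideal.span {(g : PowerSeries ℤ_[p])}) = d ∧
    ∃ b : Module.Basis (Fin d) ℤ_[p] ((Lam p) ⧸ Ideal.span {(g : PowerSeries ℤ_[p])}),
      ∀ i : Fin d,
        b i = Ideal.Quotient.mk (Ideal.span {(g : PowerSeries ℤ_[p])})
          (PowerSeries.X ^ (i : ℕ)) := by
  subst hdeg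
  let b := hdist.isDistinguishedAt.basisQuotientPowerSeries
  exact ⟨.of_basis b, by rw [Module.finrank_eq_card_basis b, Fintype.card_fin], b,
    hdist.isDistinguishedAt.basisQuotientPowerSeries_apply⟩
end
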